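/- Suppose C : {0,1}^n → ({0,1}^ℓ)^m is a (1, c, ε)-quantum smooth code using b bits, let u = Σ_{i=0}^{b} binom(ℓ, i), and assume 2^{b+1} ≤ cu. Then for every i ∈ [n] there exist positive semidefinite matrices F, G0, G1 on ℂ^m ⊗ ℂ^{2^ℓ} with F + G0 + G1 = I such that for every x ∈ {0,1}^n: ⟨U(x), F U(x)⟩ = 1 − 2^{b+1}/(cu), and ⟨U(x), G_{x_i} U(x)⟩ ≥ (1/2 + ε) · 2^{b+1}/(cu). (That is, a three-outcome measurement on one copy of U(x) fails with probability exactly 1 − 2^{b+1}/(cu), and conditioned on not failing outputs x_i with probability at least 1/2 + ε.) -/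

import Mathlib

open ComplexOrder Matrix

/-- A quantum decoding tuple `(j0, j1, S0, S1)`: the two query positions and the two
sets of answer bits used. -/
structure QTuple (m ℓ : ℕ) where
  j0 : Fin m
  j1 : Fin m
  S0 : Finset (Fin ℓ)
  S1 : Finset (Fin ℓ)
deriving DecidableEq

/-- Quantum decoding tuples form a finite type. -/
def QTuple.equivProd (m ℓ : ℕ) :
    (Fin m × Fin m × Finset (Fin ℓ) × Finset (Fin ℓ)) ≃ QTuple m ℓ where
  toFun p := ⟨p.1, p.2.1, p.2.2.1, p.2.2.2⟩
  invFun ω := ⟨ω.j0, ω.j1, ω.S0, ω.S1⟩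
  left_inv _ := rfl
  right_inv _ := rfl

instance (m ℓ : ℕ) : Fintype (QTuple m ℓ) :=
  Fintype.ofEquiv _ (QTuple.equivProd m ℓ)

/-- `χ T a = (-1)^{T · a}`, the sign given by the inner product mod 2 of the
characteristic vector of `T` with the bit string `a`. -/
noncomputable def chi {ℓ : ℕ} (T : Finset (Fin ℓ)) (a : Fin ℓ → Bool) : ℂ :=
  (-1) ^ (T.filter fun k => a k = true).card

/-- The state resulting from the quantum query
`Q = (1/√2)(|j0⟩ ⊗ 2^{-b/2} Σ_{T ⊆ S0} (-1)^{T·y_{j0}} |T⟩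
          + |j1⟩ ⊗ 2^{-b/2} Σ_{T ⊆ S1} (-1)^{T·y_{j1}} |T⟩)`
to the string `y : ({0,1}^ℓ)^m`, as a vector in `ℂ^m ⊗ ℂ^{2^ℓ}` (indexed by the
standard basis `Fin m × Finset (Fin ℓ)`). -/
noncomputable def Qvec {m ℓ : ℕ} (b : ℕ) (j0 j1 : Fin m) (S0 S1 : Finset (Fin ℓ))
    (y : Fin m → Fin ℓ → Bool) : Fin m × Finset (Fin ℓ) → ℂ :=
  fun p =>
    ((1 / (Real.sqrt 2 * Real.sqrt (2 ^ b)) : ℝ) : ℂ) *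
      ((if p.1 = j0 ∧ p.2 ⊆ S0 then chi p.2 (y j0) else 0) +
       (if p.1 = j1 ∧ p.2 ⊆ S1 then chi p.2 (y j1) else 0))

/-- `D` (a distribution over quantum decoding tuples) together with the POVMs `E`
witnesses that `C` is a `(1, c, ε)`-quantum smooth code using `b` bits at index `i`. -/
def IsQSCDecoder {n m ℓ : ℕ} (b : ℕ) (c ε : ℝ)
    (C : (Fin n → Bool) → Fin m → Fin ℓ → Bool) (i : Fin n)
    (D : QTuple m ℓ → ℝ)
    (E : QTuple m ℓ → Bool →
      Matrix (Fin m × Finset (Fin ℓ)) (Fin m × Finset (Fin ℓ)) ℂ) : Prop :=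
  (∀ ω, 0 ≤ D ω) ∧ (∑ ω, D ω = 1) ∧
  (∀ ω, D ω ≠ 0 → ω.j0 ≠ ω.j1 ∧ ω.S0.card = b ∧ ω.S1.card = b ∧
    (E ω false).PosSemidef ∧ (E ω true).PosSemidef ∧ E ω false + E ω true = 1) ∧
  (∀ x, 1 / 2 + ε ≤
    ∑ ω, D ω *
      (star (Qvec b ω.j0 ω.j1 ω.S0 ω.S1 (C x)) ⬝ᵥ
        (E ω (x i) *ᵥ Qvec b ω.j0 ω.j1 ω.S0 ω.S1 (C x))).re) ∧
  (∀ j : Fin m,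
    ∑ ω ∈ Finset.univ.filter
      (fun ω : QTuple m ℓ => ω.j0 = j ∨ ω.j1 = j), D ω ≤ c / m)

/-- `C : {0,1}^n → ({0,1}^ℓ)^m` is a `(1, c, ε)`-quantum smooth code using `b` bits. -/
def IsQSC (n m ℓ b : ℕ) (c ε : ℝ)
    (C : (Fin n → Bool) → Fin m → Fin ℓ → Bool) : Prop :=
  ∀ i : Fin n, ∃ (D : QTuple m ℓ → ℝ)
    (E : QTuple m ℓ → Bool →
      Matrix (Fin m × Finset (Fin ℓ)) (Fin m × Finset (Fin ℓ)) ℂ),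
    IsQSCDecoder b c ε C i D E

/-- The state `U(x) = (1/√m) Σ_j |j⟩ ⊗ (1/√u) Σ_{|T| ≤ b} (-1)^{T·C(x)_j} |T⟩`
in `ℂ^m ⊗ ℂ^{2^ℓ}`, where `u = Σ_{i=0}^{b} binom(ℓ, i)`. -/
noncomputable def Uvec (m ℓ b : ℕ) (y : Fin m → Fin ℓ → Bool) :
    Fin m × Finset (Fin ℓ) → ℂ :=
  fun p =>
    if p.2.card ≤ b then
      ((1 / (Real.sqrt m *
        Real.sqrt (∑ i ∈ Finset.range (b + 1), (ℓ.choose i : ℝ))) : ℝ) : ℂ) *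
        chi p.2 (y p.1)
    else 0

/-! Let `P_ω` be the coordinate projection onto the basis vectors `|j, T⟩` touched by the
query `ω`. Since `U(x)` has the same amplitude up to sign on every `|j, T⟩` with `|T| ≤ b`, its
projection `P_ω U(x)` is the multiple `√(2^{b+1}/(mu)) · Q_ω(x)` of the query state. Put
`G_a = (m/c) Σ_ω D(ω) P_ω E_{ω,a} P_ω`. Then `G_0 + G_1 = (m/c) Σ_ω D(ω) P_ω` is diagonal, and
smoothness bounds its entries by `1`, so `F = 1 - G_0 - G_1` is positive semidefinite. On
`U(x)` every query `ω` contributes `D(ω) · 2^{b+1}/(cu)` times its own success probability. -/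

namespace Matrix

variable {N : Type*}

lemma star_dotProduct_conj_mulVec [Fintype N] {P : Matrix N N ℂ} (hP : P.IsHermitian)
    (E : Matrix N N ℂ) (v : N → ℂ) :
    star v ⬝ᵥ ((P * E * P) *ᵥ v) = star (P *ᵥ v) ⬝ᵥ (E *ᵥ (P *ᵥ v)) := by
  rw [← mulVec_mulVec, ← mulVec_mulVec, dotProduct_mulVec, star_mulVec, hP.eq]

lemma star_smul_dotProduct_mulVec_smul [Fintype N] (r : ℝ)
    (A : Matrix N N ℂ) (v : N → ℂ) :
    star (r • v) ⬝ᵥ (A *ᵥ (r • v)) = ((r ^ 2 : ℝ) : ℂ) * (star v ⬝ᵥ (A *ᵥ v)) := by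
  rw [star_smul, mulVec_smul, dotProduct_smul, smul_dotProduct, star_trivial, smul_smul,
    Complex.real_smul, sq]

variable [DecidableEq N]

noncomputable def coordProj (s : Finset N) : Matrix N N ℂ :=
  diagonal fun p => if p ∈ s then 1 else 0

lemma isHermitian_coordProj (s : Finset N) : (coordProj s).IsHermitian :=
  isHermitian_diagonal_of_self_adjoint _ <| funext fun p => by split_ifs <;> simp_all

lemma posSemidef_one_sub_diagonal {d : N → ℝ} (hd : ∀ p, d p ≤ 1) :
    (1 - diagonal fun p => (d p : ℂ)).PosSemidef := by
  rw [← diagonal_one, diagonal_sub, posSemidef_diagonal_iff]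
  intro p
  exact_mod_cast sub_nonneg.mpr (hd p)

variable [Fintype N]

lemma coordProj_mul_self (s : Finset N) : coordProj s * coordProj s = coordProj s := by
  rw [coordProj, diagonal_mul_diagonal]
  congr 1
  funext p
  split_ifs <;> simp

lemma coordProj_mulVec (s : Finset N) (v : N → ℂ) :
    coordProj s *ᵥ v = fun p => if p ∈ s then v p else 0 := by
  funext p
  rw [coordProj, mulVec_diagonal]
  split_ifs <;> simp

lemma star_dotProduct_coordProj_mulVec (s : Finset N) (v : N → ℂ) :
    star v ⬝ᵥ (coordProj s *ᵥ v) = ∑ p ∈ s, star (v p) * v p := by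
  simp only [coordProj_mulVec, dotProduct, Pi.star_apply, mul_ite, mul_zero,
    Finset.sum_ite_mem, Finset.univ_inter]

end Matrix

section Compression

variable {N Ω : Type*} [Fintype N] [DecidableEq N] [Fintype Ω]
  (w : Ω → ℝ) (s : Ω → Finset N) (E : Ω → Bool → Matrix N N ℂ)

noncomputable def compressedMixture (a : Bool) : Matrix N N ℂ :=
  ∑ ω, w ω • (coordProj (s ω) * E ω a * coordProj (s ω))

noncomputable def coverage (p : N) : ℝ :=
  ∑ ω, if p ∈ s ω then w ω else 0

variable {w E}

lemma posSemidef_compressedMixture (hw : ∀ ω, 0 ≤ w ω) {a : Bool}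
    (hE : ∀ ω, w ω ≠ 0 → (E ω a).PosSemidef) : (compressedMixture w s E a).PosSemidef := by
  refine posSemidef_sum _ fun ω _ => ?_
  obtain hw0 | hw0 := eq_or_ne (w ω) 0
  · simpa [hw0] using PosSemidef.zero
  · have := (hE ω hw0).conjTranspose_mul_mul_same (coordProj (s ω))
    rw [(isHermitian_coordProj _).eq] at this
    exact this.smul (hw ω)

lemma compressedMixture_false_add_true (hE : ∀ ω, w ω ≠ 0 → E ω false + E ω true = 1) :
    compressedMixture w s E false + compressedMixture w s E true =
      diagonal fun p => (coverage w s p : ℂ) := by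
  have hterm : ∀ ω, w ω • (coordProj (s ω) * E ω false * coordProj (s ω)) +
      w ω • (coordProj (s ω) * E ω true * coordProj (s ω)) =
      diagonal fun p => ((if p ∈ s ω then w ω else 0 : ℝ) : ℂ) := by
    intro ω
    obtain hw0 | hw0 := eq_or_ne (w ω) 0
    · simp [hw0]
    · rw [← smul_add, ← add_mul, ← mul_add, hE ω hw0, mul_one, coordProj_mul_self, coordProj,
        ← diagonal_smul]
      congr 1
      funext p
      by_cases hp : p ∈ s ω <;> simp [hp]
  rw [compressedMixture, compressedMixture, ← Finset.sum_add_distrib,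
    Finset.sum_congr rfl fun ω _ => hterm ω]
  ext p q
  by_cases hpq : p = q <;> simp [Matrix.sum_apply, hpq, coverage]

variable (w E)

lemma star_dotProduct_compressedMixture_mulVec (a : Bool) (v : N → ℂ) :
    star v ⬝ᵥ (compressedMixture w s E a *ᵥ v) =
      ∑ ω, (w ω : ℂ) *
        (star (coordProj (s ω) *ᵥ v) ⬝ᵥ (E ω a *ᵥ (coordProj (s ω) *ᵥ v))) := by
  simp only [compressedMixture, sum_mulVec, dotProduct_sum, smul_mulVec, dotProduct_smul,
    star_dotProduct_conj_mulVec (isHermitian_coordProj _), Complex.real_smul]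

lemma star_dotProduct_diagonal_coverage_mulVec (v : N → ℂ) :
    star v ⬝ᵥ ((diagonal fun p => (coverage w s p : ℂ)) *ᵥ v) =
      ∑ ω, (w ω : ℂ) * (star v ⬝ᵥ (coordProj (s ω) *ᵥ v)) := by
  simp_rw [star_dotProduct_coordProj_mulVec]
  simp only [dotProduct, mulVec_diagonal, coverage, Pi.star_apply, Complex.ofReal_sum,
    Finset.mul_sum, Finset.sum_mul]
  rw [Finset.sum_comm]
  refine Finset.sum_congr rfl fun ω _ => ?_
  simp only [apply_ite ((↑) : ℝ → ℂ), Complex.ofReal_zero, ite_mul, zero_mul, mul_ite, mul_zero,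
    Finset.sum_ite_mem, Finset.univ_inter]
  exact Finset.sum_congr rfl fun p _ => by ring

end Compression

open Finset in
lemma card_finset_card_le (α : Type*) [Fintype α] (b : ℕ) :
    #{T : Finset α | T.card ≤ b} = ∑ i ∈ range (b + 1), (Fintype.card α).choose i := by
  rw [card_eq_sum_card_fiberwise (f := Finset.card) (t := range (b + 1))
    (fun T hT => by simpa [Nat.lt_succ_iff] using hT)]
  refine sum_congr rfl fun i hi => ?_
  rw [← card_univ, ← card_powersetCard, powersetCard_eq_filter, powerset_univ, filter_filter]
  congr 1
  ext T
  simp only [mem_filter, mem_univ, true_and]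
  constructor
  · exact And.right
  · rintro rfl
    exact ⟨by simpa [Nat.lt_succ_iff] using hi, rfl⟩

lemma sum_choose_pos (ℓ b : ℕ) : 0 < ∑ i ∈ Finset.range (b + 1), ℓ.choose i := by
  have := card_finset_card_le (Fin ℓ) b
  rw [Fintype.card_fin] at this
  exact this ▸ Finset.card_pos.2 ⟨∅, by simp⟩

lemma star_chi_mul_self {ℓ : ℕ} (T : Finset (Fin ℓ)) (a : Fin ℓ → Bool) :
    star (chi T a) * chi T a = 1 := by
  simp [chi, ← pow_add, ← two_mul, pow_mul]

namespace QTuple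

variable {m ℓ : ℕ}

def support (ω : QTuple m ℓ) : Finset (Fin m × Finset (Fin ℓ)) :=
  {ω.j0} ×ˢ ω.S0.powerset ∪ {ω.j1} ×ˢ ω.S1.powerset

lemma mem_support {ω : QTuple m ℓ} {p : Fin m × Finset (Fin ℓ)} :
    p ∈ ω.support ↔ (p.1 = ω.j0 ∧ p.2 ⊆ ω.S0) ∨ (p.1 = ω.j1 ∧ p.2 ⊆ ω.S1) := by
  simp only [support, Finset.mem_union, Finset.mem_product, Finset.mem_singleton,
    Finset.mem_powerset]

lemma card_support {ω : QTuple m ℓ} (hj : ω.j0 ≠ ω.j1) :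
    ω.support.card = 2 ^ ω.S0.card + 2 ^ ω.S1.card := by
  rw [support, Finset.card_union_of_disjoint (Finset.disjoint_product.mpr
    (Or.inl (Finset.disjoint_singleton.mpr hj)))]
  simp

end QTuple

section Amplitudes

variable {m ℓ b : ℕ}

noncomputable def uAmp (m ℓ b : ℕ) : ℝ :=
  1 / (Real.sqrt m * Real.sqrt (∑ i ∈ Finset.range (b + 1), (ℓ.choose i : ℝ)))

noncomputable def qAmp (b : ℕ) : ℝ :=
  1 / (Real.sqrt 2 * Real.sqrt (2 ^ b))

lemma uAmp_sq (m ℓ b : ℕ) :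
    uAmp m ℓ b ^ 2 = 1 / (m * (∑ i ∈ Finset.range (b + 1), ℓ.choose i : ℕ)) := by
  rw [uAmp, div_pow, mul_pow, Real.sq_sqrt (by positivity), Real.sq_sqrt (by positivity)]
  push_cast
  ring

lemma div_mul_two_pow_mul_uAmp_sq (hm : m ≠ 0) (c : ℝ) :
    m / c * (2 ^ (b + 1) * uAmp m ℓ b ^ 2) =
      2 ^ (b + 1) / (c * (∑ i ∈ Finset.range (b + 1), ℓ.choose i : ℕ)) := by
  rw [uAmp_sq]
  field_simp

lemma qAmp_sq (b : ℕ) : qAmp b ^ 2 = 1 / 2 ^ (b + 1) := by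
  rw [qAmp, div_pow, mul_pow, Real.sq_sqrt (by positivity), Real.sq_sqrt (by positivity),
    pow_succ']
  ring

lemma Uvec_apply (y : Fin m → Fin ℓ → Bool) (p : Fin m × Finset (Fin ℓ)) :
    Uvec m ℓ b y p = if p.2.card ≤ b then (uAmp m ℓ b : ℂ) * chi p.2 (y p.1) else 0 :=
  rfl

lemma star_Uvec_mul_self (y : Fin m → Fin ℓ → Bool) (p : Fin m × Finset (Fin ℓ)) :
    star (Uvec m ℓ b y p) * Uvec m ℓ b y p =
      if p.2.card ≤ b then ((uAmp m ℓ b ^ 2 : ℝ) : ℂ) else 0 := by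
  rw [Uvec_apply]
  split_ifs
  · rw [star_mul', mul_mul_mul_comm, star_chi_mul_self, mul_one, Complex.star_def,
      Complex.conj_ofReal, ← Complex.ofReal_mul, sq]
  · simp

lemma star_dotProduct_Uvec_self (hm : m ≠ 0) (y : Fin m → Fin ℓ → Bool) :
    star (Uvec m ℓ b y) ⬝ᵥ Uvec m ℓ b y = 1 := by
  simp only [dotProduct, Pi.star_apply, star_Uvec_mul_self]
  rw [Fintype.sum_prod_type]
  simp only [← Finset.sum_filter, Finset.sum_const, card_finset_card_le, Fintype.card_fin,
    Finset.card_univ, uAmp_sq, nsmul_eq_mul]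
  have : (∑ i ∈ Finset.range (b + 1), ℓ.choose i : ℂ) ≠ 0 :=
    mod_cast (sum_choose_pos ℓ b).ne'
  push_cast
  field_simp

end Amplitudes

section Support

variable {m ℓ b : ℕ} {ω : QTuple m ℓ}

lemma QTuple.card_le_of_mem_support (h0 : ω.S0.card = b) (h1 : ω.S1.card = b)
    {p : Fin m × Finset (Fin ℓ)} (hp : p ∈ ω.support) : p.2.card ≤ b := by
  rcases QTuple.mem_support.mp hp with ⟨-, hT⟩ | ⟨-, hT⟩
  · exact h0 ▸ Finset.card_le_card hT
  · exact h1 ▸ Finset.card_le_card hT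

lemma Qvec_apply_of_ne (hj : ω.j0 ≠ ω.j1) (y : Fin m → Fin ℓ → Bool)
    (p : Fin m × Finset (Fin ℓ)) :
    Qvec b ω.j0 ω.j1 ω.S0 ω.S1 y p =
      if p ∈ ω.support then (qAmp b : ℂ) * chi p.2 (y p.1) else 0 := by
  rw [Qvec, ← qAmp]
  simp only [QTuple.mem_support]
  by_cases h0 : p.1 = ω.j0 ∧ p.2 ⊆ ω.S0
  · simp [h0, hj]
  · by_cases h1 : p.1 = ω.j1 ∧ p.2 ⊆ ω.S1 <;> simp [h0, h1, hj.symm]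

lemma coordProj_support_mulVec_Uvec (hj : ω.j0 ≠ ω.j1) (h0 : ω.S0.card = b)
    (h1 : ω.S1.card = b) (y : Fin m → Fin ℓ → Bool) :
    coordProj ω.support *ᵥ Uvec m ℓ b y =
      (uAmp m ℓ b / qAmp b) • Qvec b ω.j0 ω.j1 ω.S0 ω.S1 y := by
  have hq : qAmp b ≠ 0 := by unfold qAmp; positivity
  funext p
  simp only [coordProj_mulVec, Pi.smul_apply, Qvec_apply_of_ne hj]
  split_ifs with hp
  · rw [Uvec_apply, if_pos (QTuple.card_le_of_mem_support h0 h1 hp), Complex.real_smul,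
      ← mul_assoc, ← Complex.ofReal_mul, div_mul_cancel₀ _ hq]
  · simp

lemma star_dotProduct_coordProj_support_mulVec_Uvec (hj : ω.j0 ≠ ω.j1) (h0 : ω.S0.card = b)
    (h1 : ω.S1.card = b) (y : Fin m → Fin ℓ → Bool) :
    star (Uvec m ℓ b y) ⬝ᵥ (coordProj ω.support *ᵥ Uvec m ℓ b y) =
      ((2 ^ (b + 1) * uAmp m ℓ b ^ 2 : ℝ) : ℂ) := by
  rw [star_dotProduct_coordProj_mulVec, Finset.sum_congr rfl fun p hp => by
    rw [star_Uvec_mul_self, if_pos (QTuple.card_le_of_mem_support h0 h1 hp)],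
    Finset.sum_const, QTuple.card_support hj, h0, h1, nsmul_eq_mul]
  push_cast
  ring

lemma star_dotProduct_mulVec_coordProj_support_mulVec_Uvec (hj : ω.j0 ≠ ω.j1) (h0 : ω.S0.card = b)
    (h1 : ω.S1.card = b) (y : Fin m → Fin ℓ → Bool)
    (E : Matrix (Fin m × Finset (Fin ℓ)) (Fin m × Finset (Fin ℓ)) ℂ) :
    star (coordProj ω.support *ᵥ Uvec m ℓ b y) ⬝ᵥ
        (E *ᵥ (coordProj ω.support *ᵥ Uvec m ℓ b y)) =
      ((2 ^ (b + 1) * uAmp m ℓ b ^ 2 : ℝ) : ℂ) *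
        (star (Qvec b ω.j0 ω.j1 ω.S0 ω.S1 y) ⬝ᵥ (E *ᵥ Qvec b ω.j0 ω.j1 ω.S0 ω.S1 y)) := by
  rw [coordProj_support_mulVec_Uvec hj h0 h1, Matrix.star_smul_dotProduct_mulVec_smul, div_pow,
    qAmp_sq]
  congr 3
  field_simp

end Support

namespace IsQSCDecoder

variable {n m ℓ b : ℕ} {c ε : ℝ} {C : (Fin n → Bool) → Fin m → Fin ℓ → Bool} {i : Fin n}
  {D : QTuple m ℓ → ℝ}
  {E : QTuple m ℓ → Bool → Matrix (Fin m × Finset (Fin ℓ)) (Fin m × Finset (Fin ℓ)) ℂ}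

lemma length_pos (hd : IsQSCDecoder b c ε C i D E) : 0 < m := by
  obtain ⟨-, hsum, -⟩ := hd
  rcases Nat.eq_zero_or_pos m with rfl | hm
  · have : IsEmpty (QTuple 0 ℓ) := ⟨fun ω => ω.j0.elim0⟩
    simp at hsum
  · exact hm

lemma coverage_support_le (hd : IsQSCDecoder b c ε C i D E) (hc : 0 < c)
    (p : Fin m × Finset (Fin ℓ)) :
    coverage (fun ω => m / c * D ω) QTuple.support p ≤ 1 := by
  obtain ⟨hD, -, -, -, hsmooth⟩ := hd
  have hsub : Finset.univ.filter (fun ω : QTuple m ℓ => p ∈ ω.support) ⊆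
      Finset.univ.filter (fun ω : QTuple m ℓ => ω.j0 = p.1 ∨ ω.j1 = p.1) :=
    Finset.monotone_filter_right _ fun ω _ hp => by
      rcases QTuple.mem_support.mp hp with ⟨h, -⟩ | ⟨h, -⟩
      exacts [Or.inl h.symm, Or.inr h.symm]
  calc coverage (fun ω => m / c * D ω) QTuple.support p
      = m / c * ∑ ω ∈ Finset.univ.filter (fun ω : QTuple m ℓ => p ∈ ω.support), D ω := by
        rw [coverage, Finset.sum_filter, Finset.mul_sum]
        simp only [mul_ite, mul_zero]
    _ ≤ m / c * ∑ ω ∈ Finset.univ.filter (fun ω : QTuple m ℓ => ω.j0 = p.1 ∨ ω.j1 = p.1), D ω :=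
        mul_le_mul_of_nonneg_left
          (Finset.sum_le_sum_of_subset_of_nonneg hsub fun ω _ _ => hD ω) (by positivity)
    _ ≤ m / c * (c / m) := by gcongr; exact hsmooth p.1
    _ ≤ 1 := by
        rw [div_mul_div_cancel₀ hc.ne']
        exact div_self_le_one _

lemma posSemidef_compressedMixture (hd : IsQSCDecoder b c ε C i D E) (hc : 0 < c)
    (a : Bool) :
    (compressedMixture (fun ω => m / c * D ω) QTuple.support E a).PosSemidef := by
  refine _root_.posSemidef_compressedMixture _ (fun ω => mul_nonneg (by positivity) (hd.1 ω))
    fun ω hω => ?_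
  obtain ⟨-, -, -, hE0, hE1, -⟩ := hd.2.2.1 ω (right_ne_zero_of_mul hω)
  cases a
  exacts [hE0, hE1]

lemma compressedMixture_false_add_true (hd : IsQSCDecoder b c ε C i D E) :
    compressedMixture (fun ω => m / c * D ω) QTuple.support E false +
        compressedMixture (fun ω => m / c * D ω) QTuple.support E true =
      diagonal fun p => (coverage (fun ω => m / c * D ω) QTuple.support p : ℂ) :=
  _root_.compressedMixture_false_add_true _ fun ω hω =>
    (hd.2.2.1 ω (right_ne_zero_of_mul hω)).2.2.2.2.2

lemma star_dotProduct_diagonal_coverage_mulVec_Uvec (hd : IsQSCDecoder b c ε C i D E)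
    (y : Fin m → Fin ℓ → Bool) :
    star (Uvec m ℓ b y) ⬝ᵥ
        ((diagonal fun p => (coverage (fun ω => m / c * D ω) QTuple.support p : ℂ)) *ᵥ
          Uvec m ℓ b y) =
      ((2 ^ (b + 1) / (c * (∑ i ∈ Finset.range (b + 1), ℓ.choose i : ℕ)) : ℝ) : ℂ) := by
  rw [star_dotProduct_diagonal_coverage_mulVec, ← mul_one (2 ^ (b + 1) / _ : ℝ), ← hd.2.1,
    Finset.mul_sum, Complex.ofReal_sum]
  refine Finset.sum_congr rfl fun ω _ => ?_
  obtain hDω | hDω := eq_or_ne (D ω) 0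
  · simp [hDω]
  obtain ⟨hj, h0, h1, -⟩ := hd.2.2.1 ω hDω
  rw [star_dotProduct_coordProj_support_mulVec_Uvec hj h0 h1,
    ← div_mul_two_pow_mul_uAmp_sq hd.length_pos.ne']
  push_cast
  ring

lemma re_star_dotProduct_compressedMixture_mulVec_Uvec (hd : IsQSCDecoder b c ε C i D E)
    (a : Bool) (y : Fin m → Fin ℓ → Bool) :
    (star (Uvec m ℓ b y) ⬝ᵥ
        (compressedMixture (fun ω => m / c * D ω) QTuple.support E a *ᵥ Uvec m ℓ b y)).re =
      2 ^ (b + 1) / (c * (∑ i ∈ Finset.range (b + 1), ℓ.choose i : ℕ)) *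
        ∑ ω, D ω * (star (Qvec b ω.j0 ω.j1 ω.S0 ω.S1 y) ⬝ᵥ
          (E ω a *ᵥ Qvec b ω.j0 ω.j1 ω.S0 ω.S1 y)).re := by
  rw [star_dotProduct_compressedMixture_mulVec, Complex.re_sum, Finset.mul_sum]
  refine Finset.sum_congr rfl fun ω _ => ?_
  obtain hDω | hDω := eq_or_ne (D ω) 0
  · simp [hDω]
  obtain ⟨hj, h0, h1, -⟩ := hd.2.2.1 ω hDω
  rw [star_dotProduct_mulVec_coordProj_support_mulVec_Uvec hj h0 h1, ← mul_assoc,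
    ← Complex.ofReal_mul, Complex.re_ofReal_mul,
    ← div_mul_two_pow_mul_uAmp_sq hd.length_pos.ne']
  ring

end IsQSCDecoder

/-- if `C` is a `(1, c, ε)`-quantum smooth code using `b` bits,
`u = Σ_{i=0}^{b} binom(ℓ,i)` and `2^{b+1} ≤ c·u`, then for every `i` there is a
three-outcome POVM `(F, G0, G1)` on `ℂ^m ⊗ ℂ^{2^ℓ}` which, measured on one copy of
`U(x)`, fails (outcome `F`) with probability exactly `1 - 2^{b+1}/(cu)` and otherwise
outputs `x_i` with probability at least `(1/2 + ε) · 2^{b+1}/(cu)`. -/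
theorem stmt9 (n m ℓ b : ℕ) (c ε : ℝ)
    (C : (Fin n → Bool) → Fin m → Fin ℓ → Bool)
    (h : IsQSC n m ℓ b c ε C)
    (u : ℕ) (hu : u = ∑ i ∈ Finset.range (b + 1), ℓ.choose i)
    (hcu : (2 ^ (b + 1) : ℝ) ≤ c * u) :
    ∀ i : Fin n,
      ∃ (F : Matrix (Fin m × Finset (Fin ℓ)) (Fin m × Finset (Fin ℓ)) ℂ)
        (G : Bool → Matrix (Fin m × Finset (Fin ℓ)) (Fin m × Finset (Fin ℓ)) ℂ),
        F.PosSemidef ∧ (G false).PosSemidef ∧ (G true).PosSemidef ∧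
        F + G false + G true = 1 ∧
        ∀ x : Fin n → Bool,
          star (Uvec m ℓ b (C x)) ⬝ᵥ (F *ᵥ Uvec m ℓ b (C x)) =
            ((1 - 2 ^ (b + 1) / (c * u) : ℝ) : ℂ) ∧
          (1 / 2 + ε) * (2 ^ (b + 1) / (c * u)) ≤
            (star (Uvec m ℓ b (C x)) ⬝ᵥ (G (x i) *ᵥ Uvec m ℓ b (C x))).re := by
  intro i
  obtain ⟨D, E, hd⟩ := h i
  subst hu
  have hc : 0 < c := pos_of_mul_pos_left (lt_of_lt_of_le (by positivity) hcu) (Nat.cast_nonneg _)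
  set G := compressedMixture (fun ω => m / c * D ω) QTuple.support E
  refine ⟨1 - G false - G true, G, ?_, hd.posSemidef_compressedMixture hc false,
    hd.posSemidef_compressedMixture hc true, by abel, fun x => ⟨?_, ?_⟩⟩
  · rw [sub_sub, hd.compressedMixture_false_add_true]
    exact posSemidef_one_sub_diagonal (hd.coverage_support_le hc)
  · rw [sub_sub, hd.compressedMixture_false_add_true, sub_mulVec, one_mulVec, dotProduct_sub,
      star_dotProduct_Uvec_self hd.length_pos.ne',
      hd.star_dotProduct_diagonal_coverage_mulVec_Uvec, Complex.ofReal_sub, Complex.ofReal_one]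
  · rw [hd.re_star_dotProduct_compressedMixture_mulVec_Uvec, mul_comm]
    exact mul_le_mul_of_nonneg_left (hd.2.2.2.1 x) (by positivity)
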